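/- arXiv:2603.09067 — 2 statements merged into one kernel-verified Lean document; each statement's English description precedes it below -/
import Mathlib

section
/- Let 0 < λmin ≤ λmax be the extreme eigenvalues of a positive definite matrix F, with condition number κ = λmax/λmin > 2. Define for c ≥ 0 the function T(c) = (λmax(λmax+c))/(λmin(λmin+c)) · λmax(λmax+c). Then T has a unique minimum on [0,∞) at c* = λmax − 2λmin. -/
/-- If `0 < λmin ≤ λmax` with condition number `κ = λmax/λmin > 2`, then
`T c = (λmax(λmax+c))/(λmin(λmin+c)) · λmax(λmax+c)` has a unique minimum
on `[0,∞)` at `c* = λmax − 2λmin`. -/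
theorem stmt_0 (lmin lmax : ℝ) (h0 : 0 < lmin) (hle : lmin ≤ lmax)
    (hκ : 2 < lmax / lmin)
    (T : ℝ → ℝ)
    (hT : ∀ c, T c = (lmax * (lmax + c)) / (lmin * (lmin + c)) * (lmax * (lmax + c))) :
    (∀ c, 0 ≤ c → T (lmax - 2 * lmin) ≤ T c) ∧
    (∀ c, 0 ≤ c → c ≠ lmax - 2 * lmin → T (lmax - 2 * lmin) < T c) := by
  have ha : 2 * lmin < lmax := by
    have := (lt_div_iff₀ h0).mp hκ
    linarith
  have key : ∀ c, 0 < lmin + c →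
      T c - T (lmax - 2 * lmin) =
        lmax ^ 2 * (c - (lmax - 2 * lmin)) ^ 2 / (lmin * (lmin + c)) := by
    intro c hc
    rw [hT, hT]
    have h1 : lmin + (lmax - 2 * lmin) = lmax - lmin := by ring
    have h2 : (0:ℝ) < lmax - lmin := by linarith
    rw [h1]
    field_simp
    ring
  constructor
  · intro c hc
    have hc' : 0 < lmin + c := by linarith
    have hk := key c hc'
    have hnn : 0 ≤ lmax ^ 2 * (c - (lmax - 2 * lmin)) ^ 2 / (lmin * (lmin + c)) := by
      positivity
    linarith
  · intro c hc hne
    have hc' : 0 < lmin + c := by linarith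
    have hk := key c hc'
    have hd : c - (lmax - 2 * lmin) ≠ 0 := sub_ne_zero.mpr hne
    have hpos : 0 < lmax ^ 2 * (c - (lmax - 2 * lmin)) ^ 2 / (lmin * (lmin + c)) := by
      have hl : 0 < lmax := by linarith
      positivity
    linarith
end

section
/- With the same setup, if κ = λmax/λmin ≤ 2, then T(c) = (λmax(λmax+c))/(λmin(λmin+c)) · λmax(λmax+c) is monotonically increasing on c ≥ 0, hence minimized at c = 0. -/
/-- If `κ = λmax/λmin ≤ 2`, then `T` is monotonically increasing on `c ≥ 0`,
hence minimized at `c = 0`. -/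
theorem stmt_1 (lmin lmax : ℝ) (h0 : 0 < lmin) (hle : lmin ≤ lmax)
    (hκ : lmax / lmin ≤ 2)
    (T : ℝ → ℝ)
    (hT : ∀ c, T c = (lmax * (lmax + c)) / (lmin * (lmin + c)) * (lmax * (lmax + c))) :
    MonotoneOn T (Set.Ici (0 : ℝ)) ∧ (∀ c, 0 ≤ c → T 0 ≤ T c) := by
  have h2 : lmax ≤ 2 * lmin := by
    rw [div_le_iff₀ h0] at hκ; linarith
  have hmono : MonotoneOn T (Set.Ici (0 : ℝ)) := by
    intro a ha b hb hab
    simp only [Set.mem_Ici] at ha hb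
    rw [hT, hT, div_mul_eq_mul_div, div_mul_eq_mul_div]
    rw [div_le_div_iff₀ (by positivity) (by positivity)]
    have hu : 0 < lmax := lt_of_lt_of_le h0 hle
    have key : 0 ≤ (b - a) * (2*lmax*lmin - lmax^2 + lmin*a + lmin*b + a*b) := by
      apply mul_nonneg (by linarith)
      nlinarith [mul_nonneg hu.le (by linarith : (0:ℝ) ≤ 2*lmin - lmax),
        mul_nonneg h0.le ha, mul_nonneg h0.le hb, mul_nonneg ha hb]
    nlinarith [mul_nonneg (mul_nonneg (sq_nonneg lmax) h0.le) key]
  exact ⟨hmono, fun c hc => hmono (by simp) (by simpa using hc) hc⟩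
end
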